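/- arXiv:2110.00873 — 3 statements merged into one kernel-verified Lean document; each statement's English description precedes it below -/
import Mathlib

section
/- Assume (A1). Then there exists a constant c = c(d, M, β) ≥ 1 such that c^{-1} r^{-d} K(r) ≤ ν(r) ≤ c r^{-d} K(r) for all r > 0. -/
open MeasureTheory Filter Real
open scoped RealInnerProductSpace

noncomputable section

/-- Pruitt's concentration function `K(r) = r⁻² ∫_{|z|<r} |z|² ν(|z|) dz`. -/
def K (d : ℕ) (ν : ℝ → ℝ) (r : ℝ) : ℝ :=
  (∫ z in Metric.ball (0 : EuclideanSpace ℝ (Fin d)) r, ‖z‖ ^ 2 * ν ‖z‖) / r ^ 2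

/-- Pruitt's concentration function `h(r) = ∫ (|z|²/r² ∧ 1) ν(|z|) dz`. -/
def hfun (d : ℕ) (ν : ℝ → ℝ) (r : ℝ) : ℝ :=
  ∫ z : EuclideanSpace ℝ (Fin d), min (‖z‖ ^ 2 / r ^ 2) 1 * ν ‖z‖

/-- The characteristic (Lévy–Khintchine) exponent `ψ(ξ) = ∫ (1 - cos⟪ξ,z⟫) ν(|z|) dz`. -/
def ψ (d : ℕ) (ν : ℝ → ℝ) (ξ : EuclideanSpace ℝ (Fin d)) : ℝ :=
  ∫ z : EuclideanSpace ℝ (Fin d), (1 - Real.cos ⟪ξ, z⟫) * ν ‖z‖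

/-- The radial nondecreasing majorant `ψ*(r) = sup_{|z| ≤ r} ψ(z)`. -/
def ψstar (d : ℕ) (ν : ℝ → ℝ) (r : ℝ) : ℝ :=
  sSup {y : ℝ | ∃ z : EuclideanSpace ℝ (Fin d), ‖z‖ ≤ r ∧ ψ d ν z = y}

/-- The generalized inverse `ψ⁻¹(u) = sup {r ≥ 0 : ψ*(r) = u}`. -/
def ψinv (d : ℕ) (ν : ℝ → ℝ) (u : ℝ) : ℝ :=
  sSup {r : ℝ | 0 ≤ r ∧ ψstar d ν r = u}

/-- Characteristic exponent `ψˢ(ξ) = s·ψ(ψ⁻¹(1/s)ξ)` of the rescaled process. -/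
def ψs (d : ℕ) (ν : ℝ → ℝ) (s : ℝ) (ξ : EuclideanSpace ℝ (Fin d)) : ℝ :=
  s * ψ d ν (ψinv d ν (1 / s) • ξ)

/-- Lévy density `νˢ(x) = s·ψ⁻¹(1/s)^{-d}·ν(x/ψ⁻¹(1/s))` of the rescaled process. -/
def νs (d : ℕ) (ν : ℝ → ℝ) (s : ℝ) (x : EuclideanSpace ℝ (Fin d)) : ℝ :=
  s / ψinv d ν (1 / s) ^ d * ν (‖x‖ / ψinv d ν (1 / s))

/-- `ψ^{-1,s}(u) = ψ⁻¹(u/s)/ψ⁻¹(1/s)`. -/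
def ψinvs (d : ℕ) (ν : ℝ → ℝ) (s u : ℝ) : ℝ :=
  ψinv d ν (u / s) / ψinv d ν (1 / s)

/-- The stable constant `𝒜(d,α)`. -/
def Aconst (d : ℕ) (α : ℝ) : ℝ :=
  α * (2 : ℝ) ^ (α - 1) * Real.Gamma (((d : ℝ) + α) / 2) /
    (Real.Gamma (1 - α / 2) * Real.pi ^ ((d : ℝ) / 2))

/-- Heat kernel of the rescaled process, via Fourier inversion. -/
def pts (d : ℕ) (ν : ℝ → ℝ) (s t : ℝ) (x : EuclideanSpace ℝ (Fin d)) : ℝ :=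
  ((2 * Real.pi) ^ d)⁻¹ *
    ∫ ξ : EuclideanSpace ℝ (Fin d), Real.cos ⟪ξ, x⟫ * Real.exp (-(t * ψs d ν s ξ))

/-- Heat kernel of the isotropic α-stable process. -/
def ptα (d : ℕ) (α t : ℝ) (x : EuclideanSpace ℝ (Fin d)) : ℝ :=
  ((2 * Real.pi) ^ d)⁻¹ *
    ∫ ξ : EuclideanSpace ℝ (Fin d), Real.cos ⟪ξ, x⟫ * Real.exp (-(t * ‖ξ‖ ^ α))

/-- Heat kernel of the original process, via Fourier inversion. -/
def pt (d : ℕ) (ν : ℝ → ℝ) (t : ℝ) (x : EuclideanSpace ℝ (Fin d)) : ℝ :=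
  ((2 * Real.pi) ^ d)⁻¹ *
    ∫ ξ : EuclideanSpace ℝ (Fin d), Real.cos ⟪ξ, x⟫ * Real.exp (-(t * ψ d ν ξ))

/-!
For `0 < |z| < r`, monotonicity gives `ν(r) ≤ ν(|z|)` and (A1) gives
`ν(|z|) ≤ M (r/|z|)^(d+β) ν(r)`. So on the ball `B_r` the integrand `|z|² ν(|z|)` of `r² K(r)` lies
between `ν(r) |z|²` and `M ν(r) r^(d+β) |z|^(2-d-β)`. In polar coordinates
`∫_{B_r} |z|^s dz = d ω_d r^(s+d) / (s+d)` for `s > -d`, and `2 - d - β > -d` because `β < 2`;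
both bounds are therefore constant multiples of `ν(r) r^(d+2)`.
-/

open Set Metric Module

lemma Real.pow_sub_one_mul_rpow {n : ℕ} (hn : 1 ≤ n) {y : ℝ} (hy : 0 < y) (s : ℝ) :
    y ^ (n - 1) * y ^ s = y ^ (s + n - 1) := by
  rw [add_sub_assoc, rpow_add hy, mul_comm, ← rpow_natCast, Nat.cast_sub hn, Nat.cast_one]

lemma AntitoneOn.aestronglyMeasurable_comp_norm {E : Type*} [NormedAddCommGroup E]
    [MeasurableSpace E] [BorelSpace E] (μ : Measure E) [NullSingletonClass μ] {ν : ℝ → ℝ}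
    (hν : AntitoneOn ν (Ioi 0)) : AEStronglyMeasurable (fun x : E => ν ‖x‖) μ := by
  -- `ν ∘ exp` is antitone on all of `ℝ`, hence measurable.
  have hexp : Measurable fun t => ν (exp t) :=
    Antitone.measurable fun a b hab => hν (exp_pos a) (exp_pos b) (exp_le_exp.2 hab)
  refine (hexp.comp (measurable_log.comp measurable_norm)).aestronglyMeasurable.congr ?_
  filter_upwards [μ.ae_ne 0] with x hx
  simp [exp_log (norm_pos_iff.2 hx)]

lemma Real.sq_mul_le_of_le_mul_div_rpow {t r M a νt νr : ℝ} (ht : 0 < t) (hr : 0 < r)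
    (h : νt ≤ M * (r / t) ^ a * νr) : t ^ 2 * νt ≤ M * νr * r ^ a * t ^ (2 - a) := by
  calc t ^ 2 * νt ≤ t ^ 2 * (M * (r / t) ^ a * νr) := mul_le_mul_of_nonneg_left h (sq_nonneg t)
    _ = M * νr * r ^ a * t ^ (2 - a) := by
      rw [div_rpow hr.le ht.le, rpow_sub ht, rpow_two]
      field_simp

namespace MeasureTheory

variable {E : Type*} [NormedAddCommGroup E] [NormedSpace ℝ E] [FiniteDimensional ℝ E]
  [Nontrivial E] [MeasurableSpace E] [BorelSpace E] (μ : Measure E) [μ.IsAddHaarMeasure]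

lemma integrableOn_ball_norm_rpow {r s : ℝ} (hr : 0 < r) (hs : -(finrank ℝ E : ℝ) < s) :
    IntegrableOn (fun x : E => ‖x‖ ^ s) (ball 0 r) μ := by
  rw [integrableOn_fun_norm_addHaar μ (f := fun y : ℝ => y ^ s)]
  simp only [smul_eq_mul]
  rw [integrableOn_congr_fun (fun y hy => Real.pow_sub_one_mul_rpow finrank_pos hy.1 s)
      measurableSet_Ioo,
    intervalIntegral.integrableOn_Ioo_rpow_iff hr]
  linarith

lemma setIntegral_ball_norm_rpow {r s : ℝ} (hr : 0 ≤ r) (hs : -(finrank ℝ E : ℝ) < s) :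
    ∫ x in ball (0 : E) r, ‖x‖ ^ s ∂μ =
      finrank ℝ E * μ.real (ball 0 1) * (r ^ (s + finrank ℝ E) / (s + finrank ℝ E)) := by
  have hind : (ball (0 : E) r).indicator (fun x => ‖x‖ ^ s) =
      fun x => (Iio r).indicator (fun y : ℝ => y ^ s) ‖x‖ := by
    ext x; simp [indicator]
  have hsn : 0 < s + finrank ℝ E := by linarith
  have hradial : ∫ y in Ioi (0 : ℝ), y ^ (finrank ℝ E - 1) • (Iio r).indicator (· ^ s) y =
      ∫ y in (0 : ℝ)..r, y ^ (s + finrank ℝ E - 1) := by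
    rw [intervalIntegral.integral_of_le hr, integral_Ioc_eq_integral_Ioo,
      ← integral_indicator measurableSet_Ioi, ← integral_indicator measurableSet_Ioo]
    congr 1 with y
    by_cases hy : 0 < y
    · by_cases hyr : y < r <;> simp [indicator, hy, hyr, Real.pow_sub_one_mul_rpow finrank_pos hy]
    · simp [indicator, hy]
  rw [← integral_indicator measurableSet_ball, hind, integral_fun_norm_addHaar μ, hradial,
    integral_rpow (Or.inl (by linarith)), sub_add_cancel, zero_rpow hsn.ne', sub_zero,
    nsmul_eq_mul, smul_eq_mul, mul_assoc]

section PowerLawBound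

variable {ν : ℝ → ℝ} {M β r : ℝ}

lemma ae_restrict_ball_sq_mul_le_rpow (hr : 0 < r)
    (hA1 : ∀ s, 0 < s → s < r → ν s ≤ M * (r / s) ^ (finrank ℝ E + β) * ν r) :
    ∀ᵐ x ∂μ.restrict (ball 0 r), ‖x‖ ^ 2 * ν ‖x‖ ≤
      M * ν r * r ^ ((finrank ℝ E : ℝ) + β) * ‖x‖ ^ (2 - (finrank ℝ E + β)) := by
  filter_upwards [ae_restrict_mem measurableSet_ball, ae_restrict_of_ae (μ.ae_ne 0)]
    with x hxr hx0
  have hx : 0 < ‖x‖ := norm_pos_iff.2 hx0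
  exact Real.sq_mul_le_of_le_mul_div_rpow hx hr (hA1 _ hx (mem_ball_zero_iff.1 hxr))

lemma integrableOn_ball_sq_mul (hr : 0 < r) (hβ : β < 2) (hν : AntitoneOn ν (Ioi 0))
    (hν0 : ∀ s, 0 < s → 0 ≤ ν s)
    (hA1 : ∀ s, 0 < s → s < r → ν s ≤ M * (r / s) ^ (finrank ℝ E + β) * ν r) :
    IntegrableOn (fun x : E => ‖x‖ ^ 2 * ν ‖x‖) (ball 0 r) μ := by
  refine Integrable.mono'
    ((integrableOn_ball_norm_rpow μ hr (s := 2 - (finrank ℝ E + β)) (by linarith)).const_mul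
      (M * ν r * r ^ ((finrank ℝ E : ℝ) + β)))
    ((continuous_norm.pow 2).aestronglyMeasurable.mul
      (hν.aestronglyMeasurable_comp_norm μ)).restrict ?_
  filter_upwards [ae_restrict_ball_sq_mul_le_rpow μ hr hA1, ae_restrict_of_ae (μ.ae_ne 0)]
    with x hx hx0
  rwa [Real.norm_of_nonneg (mul_nonneg (sq_nonneg _) (hν0 _ (norm_pos_iff.2 hx0)))]

lemma setIntegral_ball_sq_mul_le (hr : 0 < r) (hβ : β < 2) (hν0 : ∀ s, 0 < s → 0 ≤ ν s)
    (hA1 : ∀ s, 0 < s → s < r → ν s ≤ M * (r / s) ^ (finrank ℝ E + β) * ν r) :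
    ∫ x in ball (0 : E) r, ‖x‖ ^ 2 * ν ‖x‖ ∂μ ≤
      ν r * (M * (finrank ℝ E * μ.real (ball 0 1) / (2 - β))) * r ^ (finrank ℝ E + 2) := by
  have hs : -(finrank ℝ E : ℝ) < 2 - (finrank ℝ E + β) := by linarith
  refine (integral_mono_of_nonneg ?_
    ((integrableOn_ball_norm_rpow μ hr hs).const_mul (M * ν r * r ^ ((finrank ℝ E : ℝ) + β)))
    (ae_restrict_ball_sq_mul_le_rpow μ hr hA1)).trans_eq ?_
  · filter_upwards [ae_restrict_of_ae (μ.ae_ne 0)] with x hx0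
    exact mul_nonneg (sq_nonneg _) (hν0 _ (norm_pos_iff.2 hx0))
  · rw [integral_const_mul, setIntegral_ball_norm_rpow μ hr.le hs,
      show 2 - (finrank ℝ E + β) + finrank ℝ E = 2 - β by ring, ← rpow_natCast, Nat.cast_add,
      Nat.cast_two]
    have : r ^ ((finrank ℝ E : ℝ) + 2) = r ^ ((finrank ℝ E : ℝ) + β) * r ^ (2 - β) := by
      rw [← rpow_add hr]; ring_nf
    rw [this]
    ring

lemma le_setIntegral_ball_sq_mul (hr : 0 < r) (hν : AntitoneOn ν (Ioi 0))
    (hint : IntegrableOn (fun x : E => ‖x‖ ^ 2 * ν ‖x‖) (ball 0 r) μ) :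
    ν r * (finrank ℝ E * μ.real (ball 0 1) / (finrank ℝ E + 2)) * r ^ (finrank ℝ E + 2) ≤
      ∫ x in ball (0 : E) r, ‖x‖ ^ 2 * ν ‖x‖ ∂μ := by
  have hs : -(finrank ℝ E : ℝ) < 2 := by linarith [(finrank ℝ E).cast_nonneg (α := ℝ)]
  calc ν r * (finrank ℝ E * μ.real (ball 0 1) / (finrank ℝ E + 2)) * r ^ (finrank ℝ E + 2)
      = ∫ x in ball (0 : E) r, ν r * ‖x‖ ^ (2 : ℝ) ∂μ := by
        rw [integral_const_mul, setIntegral_ball_norm_rpow μ hr.le hs, add_comm (2 : ℝ),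
          ← Nat.cast_two, ← Nat.cast_add, rpow_natCast]
        ring
    _ ≤ ∫ x in ball (0 : E) r, ‖x‖ ^ 2 * ν ‖x‖ ∂μ := by
      refine setIntegral_mono_on ((integrableOn_ball_norm_rpow μ hr hs).const_mul _) hint
        measurableSet_ball fun x hx => ?_
      rcases eq_or_ne x 0 with rfl | hx0
      · simp
      · rw [rpow_two, mul_comm]
        exact mul_le_mul_of_nonneg_left (hν (norm_pos_iff.2 hx0) hr (mem_ball_zero_iff.1 hx).le)
          (sq_nonneg _)

end PowerLawBound

end MeasureTheory

lemma inv_mul_div_le_and_le_mul_div {a b c y I p : ℝ} (ha : 0 < a) (hp : 0 < p) (hy : 0 ≤ y)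
    (hac : a⁻¹ ≤ c) (hbc : b ≤ c) (hlow : y * a * p ≤ I) (hup : I ≤ y * b * p) :
    c⁻¹ * (I / p) ≤ y ∧ y ≤ c * (I / p) := by
  have hc : 0 < c := (inv_pos.2 ha).trans_le hac
  have hI : 0 ≤ I / p := div_nonneg (le_trans (by positivity) hlow) hp.le
  constructor
  · rw [inv_mul_le_iff₀ hc, div_le_iff₀ hp]
    nlinarith [mul_le_mul_of_nonneg_left hbc hy]
  · calc y = a⁻¹ * (y * a * p / p) := by field_simp
      _ ≤ a⁻¹ * (I / p) := by gcongr
      _ ≤ c * (I / p) := by gcongr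

theorem statement3_general
    (d : ℕ) (hd : 1 ≤ d) (ν : ℝ → ℝ)
    (hν_pos : ∀ r : ℝ, 0 < r → 0 < ν r)
    (hν_mono : ∀ r₁ r₂ : ℝ, 0 < r₁ → r₁ ≤ r₂ → ν r₂ ≤ ν r₁)
    (β M : ℝ) (hβ : β ∈ Set.Ioo (0:ℝ) 2)
    (hA1 : ∀ r₁ r₂ : ℝ, 0 < r₁ → r₁ < r₂ → ν r₁ ≤ M * (r₂ / r₁) ^ ((d:ℝ) + β) * ν r₂)
:
    ∃ c : ℝ, 1 ≤ c ∧ ∀ r : ℝ, 0 < r →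
      c⁻¹ * (K d ν r / r ^ d) ≤ ν r ∧ ν r ≤ c * (K d ν r / r ^ d) := by
  have : Nontrivial (EuclideanSpace ℝ (Fin d)) :=
    Module.nontrivial_of_finrank_pos (by rwa [finrank_euclideanSpace_fin])
  have hanti : AntitoneOn ν (Ioi 0) := fun r₁ h₁ r₂ _ h => hν_mono r₁ r₂ h₁ h
  have hν0 : ∀ r, 0 < r → 0 ≤ ν r := fun r hr => (hν_pos r hr).le
  set ω := volume.real (ball (0 : EuclideanSpace ℝ (Fin d)) 1)
  have ha : 0 < d * ω / (d + 2) := by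
    have : 0 < ω := ENNReal.toReal_pos (measure_ball_pos _ _ one_pos).ne' measure_ball_lt_top.ne
    have : (0 : ℝ) < d := by exact_mod_cast hd
    positivity
  refine ⟨max (max (M * (d * ω / (2 - β))) (d * ω / (d + 2))⁻¹) 1, le_max_right _ _,
    fun r hr => ?_⟩
  have hA1r : ∀ s, 0 < s → s < r → ν s ≤
      M * (r / s) ^ ((finrank ℝ (EuclideanSpace ℝ (Fin d)) : ℝ) + β) * ν r := by
    simpa only [finrank_euclideanSpace_fin] using fun s hs hsr => hA1 s r hs hsr
  have hlow := le_setIntegral_ball_sq_mul volume hr hanti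
    (integrableOn_ball_sq_mul volume hr hβ.2 hanti hν0 hA1r)
  have hup := setIntegral_ball_sq_mul_le volume hr hβ.2 hν0 hA1r
  simp only [finrank_euclideanSpace_fin] at hlow hup
  rw [K, div_div, ← pow_add, add_comm 2]
  exact inv_mul_div_le_and_le_mul_div ha (by positivity) (hν0 r hr)
    ((le_max_right _ _).trans (le_max_left _ _)) ((le_max_left _ _).trans (le_max_left _ _))
    hlow hup

theorem statement3
    (d : ℕ) (hd : 1 ≤ d) (ν : ℝ → ℝ)
    (hν_pos : ∀ r : ℝ, 0 < r → 0 < ν r)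
    (hν_mono : ∀ r₁ r₂ : ℝ, 0 < r₁ → r₁ ≤ r₂ → ν r₂ ≤ ν r₁)
    (hint : Integrable (fun z : EuclideanSpace ℝ (Fin d) => min (‖z‖ ^ 2) 1 * ν ‖z‖))
    (β M : ℝ) (hβ : β ∈ Set.Ioo (0:ℝ) 2) (hM : 1 < M)
    (hA1 : ∀ r₁ r₂ : ℝ, 0 < r₁ → r₁ < r₂ → ν r₁ ≤ M * (r₂ / r₁) ^ ((d:ℝ) + β) * ν r₂)
:
    ∃ c : ℝ, 1 ≤ c ∧ ∀ r : ℝ, 0 < r →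
      c⁻¹ * (K d ν r / r ^ d) ≤ ν r ∧ ν r ≤ c * (K d ν r / r ^ d) :=
  statement3_general d hd ν hν_pos hν_mono β M hβ hA1

end
end

section
/- Assume (A1) and (A2). Then for every R > 0 there exists a constant c > 0 such that h(r) ≤ c·K(r) for all r ≥ R. -/
open MeasureTheory Filter Real
open scoped RealInnerProductSpace

noncomputable section

/-!
Split `h(r) = K(r) + T(r)` with the tail `T(r) = ∫_{|z| ≥ r} ν`. Since `ν` is non-increasing, the
annulus `r/2 ≤ |z| < r` alone gives `K(r) ≳ rᵈ ν(r)`. Regular variation of index `-d-α` yields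
`ν(2s) ≤ 2^(-d-α/2) ν(s)` for large `s`, so by scaling `T(2r) ≤ 2^(-α/2) T(r)`; together with the
shell bound `T(r) ≤ ν(r) |B_{2r}| + T(2r)` this gives `T(r) ≲ rᵈ ν(r)` for large `r`. On the
remaining compact range `[R, R₀]`, `T` is bounded and `rᵈ ν(r)` is bounded below.
-/

namespace PruittConcentration

open Metric Set Module
open scoped Pointwise

section Tail

variable {E : Type*} [NormedAddCommGroup E] [MeasurableSpace E]

def radialTail (μ : Measure E) (ν : ℝ → ℝ) (a : ℝ) : ℝ := ∫ z in (ball (0 : E) a)ᶜ, ν ‖z‖ ∂μ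

variable [BorelSpace E] {μ : Measure E} {ν : ℝ → ℝ}

lemma integrableOn_compl_ball (hint : Integrable (fun z : E => min (‖z‖ ^ 2) 1 * ν ‖z‖) μ)
    {a : ℝ} (ha : 0 < a) : IntegrableOn (fun z : E => ν ‖z‖) (ball 0 a)ᶜ μ := by
  have hbound : ∀ z ∈ (ball (0 : E) a)ᶜ, ‖(min (‖z‖ ^ 2) 1)⁻¹‖ ≤ (min (a ^ 2) 1)⁻¹ := by
    intro z hz
    have hz : a ≤ ‖z‖ := by simpa using hz
    rw [Real.norm_of_nonneg (by positivity)]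
    gcongr
  have hprod : IntegrableOn (fun z : E => (min (‖z‖ ^ 2) 1)⁻¹ * (min (‖z‖ ^ 2) 1 * ν ‖z‖))
      (ball 0 a)ᶜ μ :=
    hint.integrableOn.bdd_mul (by fun_prop)
      (ae_restrict_of_forall_mem measurableSet_ball.compl hbound)
  refine hprod.congr_fun (fun z hz => ?_) measurableSet_ball.compl
  have hz : 0 < ‖z‖ := ha.trans_le (by simpa using hz)
  exact inv_mul_cancel_left₀ (by positivity) _

lemma integrableOn_ball_sq_norm_mul
    (hint : Integrable (fun z : E => min (‖z‖ ^ 2) 1 * ν ‖z‖) μ) (r : ℝ) :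
    IntegrableOn (fun z : E => ‖z‖ ^ 2 * ν ‖z‖) (ball 0 r) μ := by
  have hbound : ∀ z ∈ ball (0 : E) r, ‖max (‖z‖ ^ 2) 1‖ ≤ max (r ^ 2) 1 := by
    intro z hz
    rw [mem_ball_zero_iff] at hz
    rw [Real.norm_of_nonneg (by positivity)]
    gcongr
  have hprod : IntegrableOn (fun z : E => max (‖z‖ ^ 2) 1 * (min (‖z‖ ^ 2) 1 * ν ‖z‖))
      (ball 0 r) μ :=
    hint.integrableOn.bdd_mul (by fun_prop)
      (ae_restrict_of_forall_mem measurableSet_ball hbound)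
  refine hprod.congr_fun (fun z _ => ?_) measurableSet_ball
  dsimp only
  rw [← mul_assoc, mul_comm (max _ _), min_mul_max, mul_one]

lemma radialTail_nonneg (hν : ∀ r, 0 < r → 0 ≤ ν r) {a : ℝ} (ha : 0 < a) :
    0 ≤ radialTail μ ν a :=
  setIntegral_nonneg measurableSet_ball.compl fun z hz =>
    hν _ (ha.trans_le (by simpa using hz))

lemma radialTail_le_radialTail (hν : ∀ r, 0 < r → 0 ≤ ν r)
    (hint : Integrable (fun z : E => min (‖z‖ ^ 2) 1 * ν ‖z‖) μ) {a b : ℝ} (ha : 0 < a)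
    (hab : a ≤ b) : radialTail μ ν b ≤ radialTail μ ν a :=
  setIntegral_mono_set (integrableOn_compl_ball hint ha)
    (ae_restrict_of_forall_mem measurableSet_ball.compl fun z hz =>
      hν _ (ha.trans_le (by simpa using hz)))
    (compl_subset_compl.2 (ball_subset_ball hab)).eventuallyLE

lemma radialTail_le_add_radialTail_two_mul [ProperSpace E] [IsFiniteMeasureOnCompacts μ]
    (hν : ∀ r, 0 < r → 0 ≤ ν r) (hν_mono : AntitoneOn ν (Ioi 0))
    (hint : Integrable (fun z : E => min (‖z‖ ^ 2) 1 * ν ‖z‖) μ) {a : ℝ} (ha : 0 < a) :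
    radialTail μ ν a ≤ ν a * μ.real (ball 0 (2 * a)) + radialTail μ ν (2 * a) := by
  set shell := (ball (0 : E) a)ᶜ ∩ ball 0 (2 * a)
  have hsplit := integral_inter_add_sdiff (μ := μ) (t := ball (0 : E) (2 * a))
    measurableSet_ball (integrableOn_compl_ball hint ha)
  have hdiff : (ball (0 : E) a)ᶜ \ ball 0 (2 * a) = (ball 0 (2 * a))ᶜ := by
    ext z
    simp only [Set.mem_sdiff, mem_compl_iff, mem_ball_zero_iff, not_lt]
    exact ⟨fun h => h.2, fun h => ⟨by linarith, h⟩⟩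
  have hshell : ∫ z in shell, ν ‖z‖ ∂μ ≤ ν a * μ.real (ball 0 (2 * a)) :=
    calc ∫ z in shell, ν ‖z‖ ∂μ
        ≤ ∫ _ in shell, ν a ∂μ := by
          refine setIntegral_mono_on ((integrableOn_compl_ball hint ha).mono_set
            inter_subset_left) (integrableOn_const ((measure_mono inter_subset_right).trans_lt
              measure_ball_lt_top).ne) (measurableSet_ball.compl.inter measurableSet_ball)
            fun z hz => ?_
          have hz : a ≤ ‖z‖ := by simpa using hz.1
          exact hν_mono ha (ha.trans_le hz) hz
      _ = ν a * μ.real shell := by rw [setIntegral_const, smul_eq_mul, mul_comm]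
      _ ≤ ν a * μ.real (ball 0 (2 * a)) := by
          gcongr
          · exact hν a ha
          · exact measure_ball_lt_top.ne
          · exact inter_subset_right
  rw [radialTail, radialTail, ← hsplit, hdiff]
  exact add_le_add_left hshell _

end Tail

lemma two_smul_compl_ball {E : Type*} [NormedAddCommGroup E] [NormedSpace ℝ E] (a : ℝ) :
    (2 : ℝ) • (ball (0 : E) a)ᶜ = (ball 0 (2 * a))ᶜ := by
  ext x
  rw [mem_smul_set_iff_inv_smul_mem₀ two_ne_zero]
  simp only [mem_compl_iff, mem_ball_zero_iff, not_lt, norm_smul, norm_inv, Real.norm_two]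
  constructor <;> intro h <;> linarith

section Doubling

variable {E : Type*} [NormedAddCommGroup E] [NormedSpace ℝ E] [FiniteDimensional ℝ E]
  [MeasurableSpace E] [BorelSpace E] {μ : Measure E} [μ.IsAddHaarMeasure] {ν : ℝ → ℝ}

lemma radialTail_two_mul (a : ℝ) :
    radialTail μ ν (2 * a) = 2 ^ finrank ℝ E * ∫ x in (ball (0 : E) a)ᶜ, ν (2 * ‖x‖) ∂μ := by
  have h := Measure.setIntegral_comp_smul_of_pos μ (fun z : E => ν ‖z‖) (ball 0 a)ᶜ two_pos
  simp only [norm_smul, Real.norm_two, two_smul_compl_ball, smul_eq_mul] at h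
  rw [h, radialTail, mul_inv_cancel_left₀ (by positivity)]

lemma radialTail_two_mul_le (hν : ∀ r, 0 < r → 0 ≤ ν r)
    (hint : Integrable (fun z : E => min (‖z‖ ^ 2) 1 * ν ‖z‖) μ) {q a : ℝ} (ha : 0 < a)
    (hdouble : ∀ s, a ≤ s → ν (2 * s) ≤ q * ν s) :
    radialTail μ ν (2 * a) ≤ 2 ^ finrank ℝ E * q * radialTail μ ν a := by
  rw [radialTail_two_mul, mul_assoc, radialTail, ← integral_const_mul q]
  refine mul_le_mul_of_nonneg_left ?_ (by positivity)
  refine setIntegral_mono_of_nonneg (fun x hx => hν _ ?_) (fun x hx => hdouble _ ?_)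
    ((integrableOn_compl_ball hint ha).const_mul q)
  all_goals have hx : a ≤ ‖x‖ := by simpa using hx
  all_goals linarith

lemma measureReal_ball_zero {a : ℝ} (ha : 0 < a) :
    μ.real (ball (0 : E) a) = a ^ finrank ℝ E * μ.real (ball 0 1) := by
  rw [measureReal_def, Measure.addHaar_ball_of_pos μ _ ha, ENNReal.toReal_mul,
    ENNReal.toReal_ofReal (by positivity), measureReal_def]

lemma radialTail_le_of_doubling (hν : ∀ r, 0 < r → 0 ≤ ν r) (hν_mono : AntitoneOn ν (Ioi 0))
    (hint : Integrable (fun z : E => min (‖z‖ ^ 2) 1 * ν ‖z‖) μ) {q R₀ a : ℝ} (hR₀ : 0 < R₀)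
    (hq : 2 ^ finrank ℝ E * q < 1) (hdouble : ∀ s, R₀ ≤ s → ν (2 * s) ≤ q * ν s)
    (ha : R₀ ≤ a) :
    radialTail μ ν a ≤
      2 ^ finrank ℝ E * μ.real (ball (0 : E) 1) / (1 - 2 ^ finrank ℝ E * q) *
        (a ^ finrank ℝ E * ν a) := by
  have ha₀ : 0 < a := hR₀.trans_le ha
  have hshell := radialTail_le_add_radialTail_two_mul hν hν_mono hint ha₀ (μ := μ)
  have hdoubled := radialTail_two_mul_le hν hint ha₀ fun s hs => hdouble s (ha.trans hs)
  rw [measureReal_ball_zero (by positivity), mul_pow] at hshell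
  rw [div_mul_eq_mul_div, le_div_iff₀ (by linarith)]
  nlinarith

lemma exists_radialTail_le (hν_pos : ∀ r, 0 < r → 0 < ν r) (hν_mono : AntitoneOn ν (Ioi 0))
    (hint : Integrable (fun z : E => min (‖z‖ ^ 2) 1 * ν ‖z‖) μ) {q : ℝ}
    (hq : 2 ^ finrank ℝ E * q < 1) (hdouble : ∀ᶠ s in atTop, ν (2 * s) ≤ q * ν s)
    {R : ℝ} (hR : 0 < R) :
    ∃ C, 0 ≤ C ∧ ∀ r, R ≤ r → radialTail μ ν r ≤ C * (r ^ finrank ℝ E * ν r) := by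
  have hν r (hr : 0 < r) : 0 ≤ ν r := (hν_pos r hr).le
  obtain ⟨R₁, hR₁⟩ := eventually_atTop.1 hdouble
  set R₀ := max R R₁
  have hR₀ : 0 < R₀ := hR.trans_le (le_max_left _ _)
  set C₁ := 2 ^ finrank ℝ E * μ.real (ball (0 : E) 1) / (1 - 2 ^ finrank ℝ E * q)
  have hC₁ : 0 ≤ C₁ := div_nonneg (by positivity) (by linarith)
  -- On the compact range `[R, R₀]` the tail decreases while `r ^ n * ν r ≥ R ^ n * ν R₀ > 0`.
  set C₂ := radialTail μ ν R / (R ^ finrank ℝ E * ν R₀)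
  have hmass₀ : 0 < R ^ finrank ℝ E * ν R₀ := mul_pos (pow_pos hR _) (hν_pos R₀ hR₀)
  have hC₂ : 0 ≤ C₂ := div_nonneg (radialTail_nonneg hν hR) hmass₀.le
  refine ⟨max C₁ C₂, hC₁.trans (le_max_left _ _), fun r hr => ?_⟩
  have hr₀ : 0 < r := hR.trans_le hr
  have hmass : 0 ≤ r ^ finrank ℝ E * ν r := mul_nonneg (by positivity) (hν r hr₀)
  rcases le_total R₀ r with hr' | hr'
  · calc radialTail μ ν r ≤ C₁ * (r ^ finrank ℝ E * ν r) :=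
          radialTail_le_of_doubling hν hν_mono hint hR₀ hq
            (fun s hs => hR₁ s ((le_max_right _ _).trans hs)) hr'
      _ ≤ max C₁ C₂ * (r ^ finrank ℝ E * ν r) := by gcongr; exact le_max_left _ _
  · calc radialTail μ ν r ≤ radialTail μ ν R := radialTail_le_radialTail hν hint hR hr
      _ = C₂ * (R ^ finrank ℝ E * ν R₀) := (div_mul_cancel₀ _ hmass₀.ne').symm
      _ ≤ C₂ * (r ^ finrank ℝ E * ν r) := by
          gcongr
          exacts [hν R₀ hR₀, hν_mono hr₀ hR₀ hr']
      _ ≤ max C₁ C₂ * (r ^ finrank ℝ E * ν r) := by gcongr; exact le_max_right _ _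

end Doubling

section Euclidean

variable {d : ℕ} {ν : ℝ → ℝ}

lemma hfun_eq_K_add_radialTail
    (hint : Integrable (fun z : EuclideanSpace ℝ (Fin d) => min (‖z‖ ^ 2) 1 * ν ‖z‖))
    {r : ℝ} (hr : 0 < r) :
    hfun d ν r = K d ν r + radialTail (volume : Measure (EuclideanSpace ℝ (Fin d))) ν r := by
  classical
  have hpiece : (fun z : EuclideanSpace ℝ (Fin d) => min (‖z‖ ^ 2 / r ^ 2) 1 * ν ‖z‖) =
      (ball 0 r).piecewise (fun z => ‖z‖ ^ 2 * ν ‖z‖ / r ^ 2) (fun z => ν ‖z‖) := by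
    ext z
    by_cases hz : z ∈ ball (0 : EuclideanSpace ℝ (Fin d)) r
    · have hz' : ‖z‖ < r := mem_ball_zero_iff.1 hz
      rw [piecewise_eq_of_mem _ _ _ hz, min_eq_left ((div_le_one (by positivity)).2
        (by gcongr)), div_mul_eq_mul_div]
    · have hz' : r ≤ ‖z‖ := by simpa using hz
      rw [piecewise_eq_of_notMem _ _ _ hz, min_eq_right ((one_le_div (by positivity)).2
        (by gcongr)), one_mul]
  rw [hfun, hpiece, integral_piecewise measurableSet_ball
    ((integrableOn_ball_sq_norm_mul hint r).div_const _) (integrableOn_compl_ball hint hr),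
    integral_div, K, radialTail]

lemma le_K (hν : ∀ r, 0 < r → 0 ≤ ν r) (hν_mono : AntitoneOn ν (Ioi 0))
    (hint : Integrable (fun z : EuclideanSpace ℝ (Fin d) => min (‖z‖ ^ 2) 1 * ν ‖z‖))
    {r : ℝ} (hr : 0 < r) :
    (1 - 2⁻¹ ^ d) / 4 * volume.real (ball (0 : EuclideanSpace ℝ (Fin d)) 1) * (r ^ d * ν r)
      ≤ K d ν r := by
  set annulus := ball (0 : EuclideanSpace ℝ (Fin d)) r \ ball 0 (r / 2)
  have hvol : volume.real annulus =
      (1 - 2⁻¹ ^ d) * volume.real (ball (0 : EuclideanSpace ℝ (Fin d)) 1) * r ^ d := by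
    rw [measureReal_sdiff (ball_subset_ball (by linarith)) measurableSet_ball,
      measureReal_ball_zero hr, measureReal_ball_zero (half_pos hr),
      finrank_euclideanSpace_fin, div_pow, inv_pow]
    ring
  have hlower : (r / 2) ^ 2 * ν r * volume.real annulus
      ≤ ∫ z in annulus, ‖z‖ ^ 2 * ν ‖z‖ := by
    refine setIntegral_ge_of_const_le_real (measurableSet_ball.diff measurableSet_ball)
      ((measure_mono sdiff_subset).trans_lt measure_ball_lt_top).ne (fun z hz => ?_)
      ((integrableOn_ball_sq_norm_mul hint r).mono_set sdiff_subset)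
    have hz₁ : ‖z‖ < r := mem_ball_zero_iff.1 hz.1
    have hz₂ : r / 2 ≤ ‖z‖ := by simpa using hz.2
    exact mul_le_mul (by gcongr) (hν_mono ((half_pos hr).trans_le hz₂) hr hz₁.le) (hν r hr)
      (by positivity)
  have hsub : ∫ z in annulus, ‖z‖ ^ 2 * ν ‖z‖
      ≤ ∫ z in ball (0 : EuclideanSpace ℝ (Fin d)) r, ‖z‖ ^ 2 * ν ‖z‖ := by
    refine setIntegral_mono_set (integrableOn_ball_sq_norm_mul hint r)
      (ae_of_all _ fun z => ?_) sdiff_subset.eventuallyLE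
    rcases eq_or_ne z 0 with rfl | hz
    · simp
    · exact mul_nonneg (by positivity) (hν _ (norm_pos_iff.2 hz))
  rw [K, le_div_iff₀ (by positivity)]
  calc (1 - 2⁻¹ ^ d) / 4 * volume.real (ball (0 : EuclideanSpace ℝ (Fin d)) 1) * (r ^ d * ν r)
        * r ^ 2 = (r / 2) ^ 2 * ν r * volume.real annulus := by rw [hvol]; ring
    _ ≤ _ := hlower.trans hsub

end Euclidean

lemma exists_doubling_of_tendsto {ν : ℝ → ℝ} {n : ℕ} {α : ℝ}
    (hν_pos : ∀ r, 0 < r → 0 < ν r) (hα : 0 < α)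
    (hlim : Tendsto (fun r => ν (2 * r) / ν r) atTop (nhds (2 ^ (-(n : ℝ) - α)))) :
    ∃ q, 2 ^ n * q < 1 ∧ ∀ᶠ s in atTop, ν (2 * s) ≤ q * ν s := by
  refine ⟨2 ^ (-(n : ℝ) - α / 2), ?_, ?_⟩
  · rw [← Real.rpow_natCast, ← Real.rpow_add two_pos]
    exact Real.rpow_lt_one_of_one_lt_of_neg one_lt_two (by linarith)
  · have hlt : (2 : ℝ) ^ (-(n : ℝ) - α) < 2 ^ (-(n : ℝ) - α / 2) :=
      Real.rpow_lt_rpow_of_exponent_lt one_lt_two (by linarith)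
    filter_upwards [hlim.eventually_lt_const hlt, eventually_gt_atTop 0] with s hs hs₀
    exact ((div_lt_iff₀ (hν_pos s hs₀)).1 hs).le

end PruittConcentration

open PruittConcentration

theorem statement4_general
    (d : ℕ) (hd : 1 ≤ d) (ν : ℝ → ℝ)
    (hν_pos : ∀ r : ℝ, 0 < r → 0 < ν r)
    (hν_mono : ∀ r₁ r₂ : ℝ, 0 < r₁ → r₁ ≤ r₂ → ν r₂ ≤ ν r₁)
    (hint : Integrable (fun z : EuclideanSpace ℝ (Fin d) => min (‖z‖ ^ 2) 1 * ν ‖z‖))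
    (α : ℝ) (hα : α ∈ Set.Ioo (0:ℝ) 2)
    (hA2 : ∀ lam : ℝ, 0 < lam →
      Tendsto (fun r : ℝ => ν (lam * r) / ν r) atTop (nhds (lam ^ (-(d:ℝ) - α))))
:
    ∀ R : ℝ, 0 < R → ∃ c : ℝ, 0 < c ∧ ∀ r : ℝ, R ≤ r → hfun d ν r ≤ c * K d ν r := by
  intro R hR
  have hν r (hr : 0 < r) : 0 ≤ ν r := (hν_pos r hr).le
  have hν_anti : AntitoneOn ν (Set.Ioi 0) := fun a ha b _ hab => hν_mono a b ha hab
  obtain ⟨q, hq, hdouble⟩ := exists_doubling_of_tendsto hν_pos hα.1 (hA2 2 two_pos)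
  obtain ⟨C, hC, htail⟩ := exists_radialTail_le hν_pos hν_anti hint
    (by rwa [finrank_euclideanSpace_fin]) hdouble hR
  set c := (1 - 2⁻¹ ^ d) / 4 * volume.real (Metric.ball (0 : EuclideanSpace ℝ (Fin d)) 1)
  have hc : 0 < c :=
    mul_pos (div_pos (sub_pos.2 (pow_lt_one₀ (by norm_num) (by norm_num) (by omega))) four_pos)
      (ENNReal.toReal_pos (Metric.measure_ball_pos _ _ one_pos).ne' measure_ball_lt_top.ne)
  refine ⟨1 + C / c, by positivity, fun r hr => ?_⟩
  have hr₀ : 0 < r := hR.trans_le hr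
  have htail_le : radialTail volume ν r ≤ C / c * K d ν r :=
    calc radialTail volume ν r ≤ C * (r ^ d * ν r) := by
          simpa only [finrank_euclideanSpace_fin] using htail r hr
      _ = C / c * (c * (r ^ d * ν r)) := by field_simp
      _ ≤ C / c * K d ν r := by gcongr; exact le_K hν hν_anti hint hr₀
  calc hfun d ν r = K d ν r + radialTail volume ν r := hfun_eq_K_add_radialTail hint hr₀
    _ ≤ (1 + C / c) * K d ν r := by linarith

theorem statement4
    (d : ℕ) (hd : 1 ≤ d) (ν : ℝ → ℝ)
    (hν_pos : ∀ r : ℝ, 0 < r → 0 < ν r)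
    (hν_mono : ∀ r₁ r₂ : ℝ, 0 < r₁ → r₁ ≤ r₂ → ν r₂ ≤ ν r₁)
    (hint : Integrable (fun z : EuclideanSpace ℝ (Fin d) => min (‖z‖ ^ 2) 1 * ν ‖z‖))
    (β M : ℝ) (hβ : β ∈ Set.Ioo (0:ℝ) 2) (hM : 1 < M)
    (hA1 : ∀ r₁ r₂ : ℝ, 0 < r₁ → r₁ < r₂ → ν r₁ ≤ M * (r₂ / r₁) ^ ((d:ℝ) + β) * ν r₂)
    (α : ℝ) (hα : α ∈ Set.Ioo (0:ℝ) 2)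
    (hA2 : ∀ lam : ℝ, 0 < lam →
      Tendsto (fun r : ℝ => ν (lam * r) / ν r) atTop (nhds (lam ^ (-(d:ℝ) - α))))
:
    ∀ R : ℝ, 0 < R → ∃ c : ℝ, 0 < c ∧ ∀ r : ℝ, R ≤ r → hfun d ν r ≤ c * K d ν r :=
  statement4_general d hd ν hν_pos hν_mono hint α hα hA2
end
end

section
/- Assume (A2) and the normalization ψ(ξ) = 1 for |ξ| = 1. For s ≥ 1 set ν^s(x) = s · ψ^{-1}(1/s)^{-d} · ν(x/ψ^{-1}(1/s)). Then for every δ > 0 there exist s₀ ≥ 1 and C > 0 such that ν^s(y) ≤ C·|y|^{-d-α/2} for all s ≥ s₀ and all y with |y| ≥ δ. -/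
/-!
Write `b = ψ⁻¹(1/s)`, so that `νˢ(y) = s b⁻ᵈ ν(|y|/b)`. Restricting the integral defining
`ψ(b e)`, `|e| = 1`, to the ball of radius `1/b` and rescaling gives `ψ*(b) ≥ c b⁻ᵈ ν(1/b)`
with `c > 0`, while continuity of `ψ` gives `ψ*(b) ≤ 1/s`; hence `s b⁻ᵈ ν(1/b) ≤ 1/c`.
As `ψ*` is positive, `b` is small once `s` is large, and Potter's bound
`ν(rR) ≤ C r^(-d-α/2) ν(R)` for `r ≥ δ`, `R ≥ R₀`, applied with `R = 1/b`, finishes the proof.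
-/

open MeasureTheory Filter Real
open scoped RealInnerProductSpace

noncomputable section

open Set Metric

section Potter

variable {ν : ℝ → ℝ}

lemma eventually_le_mul_of_tendsto_div (hν_pos : ∀ r : ℝ, 0 < r → 0 < ν r) {lam ℓ c : ℝ}
    (h : Tendsto (fun r => ν (lam * r) / ν r) atTop (nhds ℓ)) (hℓc : ℓ < c) :
    ∀ᶠ t in atTop, ν (lam * t) ≤ c * ν t := by
  filter_upwards [h.eventually_lt_const hℓc, eventually_gt_atTop 0] with t ht ht0
  exact ((div_lt_iff₀ (hν_pos t ht0)).1 ht).le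

lemma le_pow_mul_of_doubling {T q : ℝ} (hq : 0 ≤ q) (hT : 0 < T)
    (hdouble : ∀ t, T ≤ t → ν (2 * t) ≤ q * ν t) (k : ℕ) {t : ℝ} (ht : T ≤ t) :
    ν (2 ^ k * t) ≤ q ^ k * ν t := by
  induction k with
  | zero => simp
  | succ k ih =>
    have hkt : T ≤ 2 ^ k * t :=
      ht.trans (le_mul_of_one_le_left (hT.trans_le ht).le (one_le_pow₀ one_le_two))
    calc ν (2 ^ (k + 1) * t) = ν (2 * (2 ^ k * t)) := by ring_nf
      _ ≤ q * ν (2 ^ k * t) := hdouble _ hkt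
      _ ≤ q * (q ^ k * ν t) := mul_le_mul_of_nonneg_left ih hq
      _ = q ^ (k + 1) * ν t := by ring

lemma le_rpow_mul_of_doubling (hν_pos : ∀ r : ℝ, 0 < r → 0 < ν r)
    (hν_mono : AntitoneOn ν (Ioi 0)) {T β : ℝ} (hβ : 0 ≤ β) (hT : 0 < T)
    (hdouble : ∀ t, T ≤ t → ν (2 * t) ≤ 2 ^ (-β) * ν t) {t r : ℝ} (ht : T ≤ t) (hr : 1 ≤ r) :
    ν (r * t) ≤ 2 ^ β * r ^ (-β) * ν t := by
  obtain ⟨k, hk, hrk⟩ := exists_nat_pow_near hr one_lt_two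
  have ht0 : 0 < t := hT.trans_le ht
  have hpow : ((2 : ℝ) ^ (-β)) ^ k ≤ 2 ^ β * r ^ (-β) :=
    calc ((2 : ℝ) ^ (-β)) ^ k = 2 ^ β * ((2 : ℝ) ^ (k + 1)) ^ (-β) := by
          rw [← rpow_pow_comm zero_le_two, pow_succ, mul_left_comm, ← rpow_add two_pos,
            add_neg_cancel, rpow_zero, mul_one]
      _ ≤ 2 ^ β * r ^ (-β) := mul_le_mul_of_nonneg_left
          (rpow_le_rpow_of_nonpos (by linarith) hrk.le (neg_nonpos.2 hβ)) (by positivity)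
  calc ν (r * t) ≤ ν (2 ^ k * t) :=
        hν_mono (mem_Ioi.2 (by positivity)) (mem_Ioi.2 (by positivity))
          (mul_le_mul_of_nonneg_right hk ht0.le)
    _ ≤ ((2 : ℝ) ^ (-β)) ^ k * ν t :=
        le_pow_mul_of_doubling (by positivity) hT hdouble k ht
    _ ≤ 2 ^ β * r ^ (-β) * ν t := mul_le_mul_of_nonneg_right hpow (hν_pos t ht0).le

theorem potter_upper (hν_pos : ∀ r : ℝ, 0 < r → 0 < ν r) (hν_mono : AntitoneOn ν (Ioi 0))
    {β γ : ℝ} (hβ : 0 ≤ β) (hβγ : β < γ)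
    (hreg : ∀ lam : ℝ, 0 < lam →
      Tendsto (fun r : ℝ => ν (lam * r) / ν r) atTop (nhds (lam ^ (-γ))))
    {δ : ℝ} (hδ : 0 < δ) :
    ∃ C R₀ : ℝ, 0 < C ∧ 0 < R₀ ∧
      ∀ R, R₀ ≤ R → ∀ r, δ ≤ r → ν (r * R) ≤ C * r ^ (-β) * ν R := by
  have h2 : (2 : ℝ) ^ (-γ) < 2 ^ (-β) := rpow_lt_rpow_of_exponent_lt one_lt_two (by linarith)
  obtain ⟨T, hT⟩ := eventually_atTop.1
    ((eventually_le_mul_of_tendsto_div hν_pos (hreg 2 two_pos) h2).and (eventually_gt_atTop 0))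
  have hT0 : 0 < T := (hT T le_rfl).2
  obtain ⟨T', hT'⟩ := eventually_atTop.1
    (eventually_le_mul_of_tendsto_div hν_pos (hreg δ hδ) (lt_add_one (δ ^ (-γ))))
  refine ⟨2 ^ β * δ ^ β * (δ ^ (-γ) + 1), max (T / δ) T', by positivity,
    lt_max_of_lt_left (by positivity), fun R hR r hr => ?_⟩
  have hδR : T ≤ δ * R := by
    have := (le_max_left _ _).trans hR
    rwa [div_le_iff₀ hδ, mul_comm] at this
  have hr0 : 0 < r := hδ.trans_le hr
  calc ν (r * R) = ν (r / δ * (δ * R)) := by field_simp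
    _ ≤ 2 ^ β * (r / δ) ^ (-β) * ν (δ * R) :=
        le_rpow_mul_of_doubling hν_pos hν_mono hβ hT0 (fun t ht => (hT t ht).1) hδR
          ((one_le_div hδ).2 hr)
    _ ≤ 2 ^ β * (r / δ) ^ (-β) * ((δ ^ (-γ) + 1) * ν R) := by
        gcongr
        exact hT' R ((le_max_right _ _).trans hR)
    _ = 2 ^ β * δ ^ β * (δ ^ (-γ) + 1) * r ^ (-β) * ν R := by
        rw [div_rpow hr0.le hδ.le, rpow_neg hδ.le, div_inv_eq_mul]
        ring

end Potter

lemma one_sub_cos_inner_le {E : Type*} [NormedAddCommGroup E] [InnerProductSpace ℝ E]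
    (ξ z : E) : 1 - cos ⟪ξ, z⟫ ≤ max (‖ξ‖ ^ 2) 2 * min (‖z‖ ^ 2) 1 := by
  rcases le_total (‖z‖ ^ 2) 1 with h | h
  · rw [min_eq_left h]
    have hcos : 1 - cos ⟪ξ, z⟫ ≤ ⟪ξ, z⟫ ^ 2 / 2 := by
      linarith [one_sub_sq_div_two_le_cos (x := ⟪ξ, z⟫)]
    have hinner : ⟪ξ, z⟫ ^ 2 ≤ ‖ξ‖ ^ 2 * ‖z‖ ^ 2 := by
      rw [← mul_pow, ← sq_abs]
      exact pow_le_pow_left₀ (abs_nonneg _) (abs_real_inner_le_norm ξ z) 2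
    nlinarith [le_max_left (‖ξ‖ ^ 2) 2, sq_nonneg ‖z‖]
  · rw [min_eq_right h, mul_one]
    linarith [neg_one_le_cos ⟪ξ, z⟫, le_max_right (‖ξ‖ ^ 2) 2]

lemma integral_ball_one_sub_cos_inner_pos {E : Type*} [NormedAddCommGroup E]
    [InnerProductSpace ℝ E] [FiniteDimensional ℝ E] [MeasurableSpace E] [BorelSpace E]
    (μ : Measure E) [μ.IsAddHaarMeasure] {e : E} (he : ‖e‖ = 1) :
    0 < ∫ w in ball (0 : E) 1, (1 - cos ⟪e, w⟫) ∂μ := by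
  have hcont : Continuous fun w : E => 1 - cos ⟪e, w⟫ := by fun_prop
  rw [setIntegral_pos_iff_support_of_nonneg_ae
    (.of_forall fun w => sub_nonneg.2 (cos_le_one _))
    ((hcont.continuousOn.integrableOn_compact (isCompact_closedBall 0 1)).mono_set
      ball_subset_closedBall)]
  refine (hcont.isOpen_support.inter isOpen_ball).measure_pos μ ⟨(1 / 2 : ℝ) • e, ?_, ?_⟩
  · have hcos : cos (1 / 2) < cos 0 :=
      cos_lt_cos_of_nonneg_of_le_pi le_rfl (by linarith [pi_gt_three]) (by norm_num)
    rw [cos_zero] at hcos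
    simp only [Function.mem_support, inner_smul_right, real_inner_self_eq_norm_sq, he]
    norm_num
    linarith
  · simp only [mem_ball_zero_iff, norm_smul, he]
    norm_num

lemma setIntegral_ball_one_sub_cos_inner_smul {E : Type*} [NormedAddCommGroup E]
    [InnerProductSpace ℝ E] [FiniteDimensional ℝ E] [MeasurableSpace E] [BorelSpace E]
    (μ : Measure E) [μ.IsAddHaarMeasure] {b : ℝ} (hb : 0 < b) (e : E) :
    ∫ z in ball (0 : E) b⁻¹, (1 - cos ⟪b • e, z⟫) ∂μ =
      (b ^ Module.finrank ℝ E)⁻¹ * ∫ w in ball (0 : E) 1, (1 - cos ⟪e, w⟫) ∂μ := by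
  have h := Measure.setIntegral_comp_smul_of_pos μ (fun z => 1 - cos ⟪b • e, z⟫) (ball 0 1)
    (inv_pos.2 hb)
  rw [smul_unitBall_of_pos (inv_pos.2 hb)] at h
  simp only [real_inner_smul_left, real_inner_smul_right, inv_mul_cancel_left₀ hb.ne'] at h ⊢
  rw [h, inv_pow, inv_inv, smul_eq_mul, inv_mul_cancel_left₀ (pow_ne_zero _ hb.ne')]

section LevyExponent

variable {d : ℕ} {ν : ℝ → ℝ}

lemma psiStar_eq_sSup_image (r : ℝ) : ψstar d ν r = sSup (ψ d ν '' closedBall 0 r) := by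
  simp only [ψstar, Set.image, mem_closedBall_zero_iff]

lemma psiStar_le_of_forall {r c : ℝ} (hr : 0 ≤ r)
    (h : ∀ z : EuclideanSpace ℝ (Fin d), ‖z‖ ≤ r → ψ d ν z ≤ c) : ψstar d ν r ≤ c := by
  rw [psiStar_eq_sSup_image]
  exact csSup_le ((nonempty_closedBall.2 hr).image _)
    (forall_mem_image.2 fun z hz => h z (mem_closedBall_zero_iff.1 hz))

lemma psiInv_nonneg (u : ℝ) : 0 ≤ ψinv d ν u := Real.sSup_nonneg fun _ hr => hr.1

variable [NeZero d]

lemma ae_nonneg_nu_norm (hν_pos : ∀ r : ℝ, 0 < r → 0 < ν r) :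
    ∀ᵐ z : EuclideanSpace ℝ (Fin d), 0 ≤ ν ‖z‖ := by
  filter_upwards [Measure.ae_ne volume 0] with z hz using (hν_pos _ (norm_pos_iff.2 hz)).le

lemma aemeasurable_nu_norm
    (hint : Integrable (fun z : EuclideanSpace ℝ (Fin d) => min (‖z‖ ^ 2) 1 * ν ‖z‖)) :
    AEMeasurable (fun z : EuclideanSpace ℝ (Fin d) => ν ‖z‖) := by
  refine ((by fun_prop : Measurable fun z : EuclideanSpace ℝ (Fin d) =>
    (min (‖z‖ ^ 2) 1)⁻¹).aemeasurable.mul hint.aemeasurable).congr ?_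
  filter_upwards [Measure.ae_ne volume 0] with z hz
  have : 0 < min (‖z‖ ^ 2) 1 := lt_min (by positivity) one_pos
  simp only [Pi.mul_apply]
  field_simp

lemma integrable_one_sub_cos_inner_mul_nu (hν_pos : ∀ r : ℝ, 0 < r → 0 < ν r)
    (hint : Integrable (fun z : EuclideanSpace ℝ (Fin d) => min (‖z‖ ^ 2) 1 * ν ‖z‖))
    (ξ : EuclideanSpace ℝ (Fin d)) :
    Integrable (fun z : EuclideanSpace ℝ (Fin d) => (1 - cos ⟪ξ, z⟫) * ν ‖z‖) := by
  refine (hint.const_mul (max (‖ξ‖ ^ 2) 2)).mono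
    (((by fun_prop : Continuous fun z : EuclideanSpace ℝ (Fin d) =>
      1 - cos ⟪ξ, z⟫).aemeasurable.mul (aemeasurable_nu_norm hint)).aestronglyMeasurable) ?_
  filter_upwards [ae_nonneg_nu_norm hν_pos] with z hz
  have hcos : 0 ≤ 1 - cos ⟪ξ, z⟫ := sub_nonneg.2 (cos_le_one _)
  rw [norm_of_nonneg (by positivity), norm_of_nonneg (by positivity), ← mul_assoc]
  exact mul_le_mul_of_nonneg_right (one_sub_cos_inner_le ξ z) hz

lemma continuous_psi (hν_pos : ∀ r : ℝ, 0 < r → 0 < ν r)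
    (hint : Integrable (fun z : EuclideanSpace ℝ (Fin d) => min (‖z‖ ^ 2) 1 * ν ‖z‖)) :
    Continuous (ψ d ν) := by
  refine continuous_iff_continuousAt.2 fun ξ₀ => continuousAt_of_dominated
    (bound := fun z => max ((‖ξ₀‖ + 1) ^ 2) 2 * (min (‖z‖ ^ 2) 1 * ν ‖z‖))
    (.of_forall fun ξ => (integrable_one_sub_cos_inner_mul_nu hν_pos hint ξ).aestronglyMeasurable)
    ?_ (hint.const_mul _) (.of_forall fun z => by fun_prop)
  filter_upwards [ball_mem_nhds ξ₀ one_pos] with ξ hξ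
  filter_upwards [ae_nonneg_nu_norm hν_pos] with z hz
  have hξ : ‖ξ‖ ≤ ‖ξ₀‖ + 1 := by
    linarith [norm_le_norm_add_norm_sub' ξ ξ₀, (mem_ball_iff_norm.1 hξ).le]
  have hcos : 0 ≤ 1 - cos ⟪ξ, z⟫ := sub_nonneg.2 (cos_le_one _)
  rw [norm_of_nonneg (by positivity), ← mul_assoc]
  refine mul_le_mul_of_nonneg_right ((one_sub_cos_inner_le ξ z).trans ?_) hz
  gcongr

lemma psi_le_psiStar (hν_pos : ∀ r : ℝ, 0 < r → 0 < ν r)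
    (hint : Integrable (fun z : EuclideanSpace ℝ (Fin d) => min (‖z‖ ^ 2) 1 * ν ‖z‖))
    {r : ℝ} {z : EuclideanSpace ℝ (Fin d)} (hz : ‖z‖ ≤ r) :
    ψ d ν z ≤ ψstar d ν r := by
  rw [psiStar_eq_sSup_image]
  exact le_csSup ((isCompact_closedBall 0 r).bddAbove_image
    (continuous_psi hν_pos hint).continuousOn) (mem_image_of_mem _ (mem_closedBall_zero_iff.2 hz))

lemma monotoneOn_psiStar (hν_pos : ∀ r : ℝ, 0 < r → 0 < ν r)
    (hint : Integrable (fun z : EuclideanSpace ℝ (Fin d) => min (‖z‖ ^ 2) 1 * ν ‖z‖)) :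
    MonotoneOn (ψstar d ν) (Ici 0) := by
  intro r₁ hr₁ r₂ _ hr
  simp only [psiStar_eq_sSup_image]
  exact csSup_le_csSup ((isCompact_closedBall 0 r₂).bddAbove_image
      (continuous_psi hν_pos hint).continuousOn)
    ((nonempty_closedBall.2 hr₁).image _) (image_mono (closedBall_subset_closedBall hr))

lemma psiStar_psiInv_le (hν_pos : ∀ r : ℝ, 0 < r → 0 < ν r)
    (hint : Integrable (fun z : EuclideanSpace ℝ (Fin d) => min (‖z‖ ^ 2) 1 * ν ‖z‖))
    {u : ℝ} (hb : 0 < ψinv d ν u) : ψstar d ν (ψinv d ν u) ≤ u := by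
  have hball : ball 0 (ψinv d ν u) ⊆ {z | ψ d ν z ≤ u} := fun z hz => by
    obtain ⟨r, ⟨-, hru⟩, hzr⟩ : ∃ r ∈ {r : ℝ | 0 ≤ r ∧ ψstar d ν r = u}, ‖z‖ < r := by
      by_contra! h
      exact (mem_ball_zero_iff.1 hz).not_ge (Real.sSup_le h (norm_nonneg z))
    exact hru ▸ psi_le_psiStar hν_pos hint hzr.le
  have hclosed : closedBall 0 (ψinv d ν u) ⊆ {z | ψ d ν z ≤ u} := by
    rw [← closure_ball 0 hb.ne']
    exact (isClosed_le (continuous_psi hν_pos hint) continuous_const).closure_subset_iff.2 hball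
  exact psiStar_le_of_forall hb.le fun z hz => hclosed (mem_closedBall_zero_iff.2 hz)

lemma psiInv_lt_of_lt_psiStar (hν_pos : ∀ r : ℝ, 0 < r → 0 < ν r)
    (hint : Integrable (fun z : EuclideanSpace ℝ (Fin d) => min (‖z‖ ^ 2) 1 * ν ‖z‖))
    {u r : ℝ} (hr : 0 ≤ r) (hb : 0 < ψinv d ν u) (h : u < ψstar d ν r) : ψinv d ν u < r := by
  by_contra! hle
  exact h.not_ge ((monotoneOn_psiStar hν_pos hint hr (hr.trans hle) hle).trans
    (psiStar_psiInv_le hν_pos hint hb))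

lemma nu_inv_mul_le_psiStar (hν_pos : ∀ r : ℝ, 0 < r → 0 < ν r)
    (hν_mono : AntitoneOn ν (Ioi 0))
    (hint : Integrable (fun z : EuclideanSpace ℝ (Fin d) => min (‖z‖ ^ 2) 1 * ν ‖z‖))
    {e : EuclideanSpace ℝ (Fin d)} (he : ‖e‖ = 1) {b : ℝ} (hb : 0 < b) :
    (b ^ d)⁻¹ * (∫ w in ball (0 : EuclideanSpace ℝ (Fin d)) 1, (1 - cos ⟪e, w⟫)) * ν b⁻¹ ≤
      ψstar d ν b := by
  have hcont : Continuous fun z : EuclideanSpace ℝ (Fin d) => 1 - cos ⟪b • e, z⟫ := by fun_prop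
  calc _ = ∫ z in ball (0 : EuclideanSpace ℝ (Fin d)) b⁻¹, (1 - cos ⟪b • e, z⟫) * ν b⁻¹ := by
        rw [integral_mul_const, setIntegral_ball_one_sub_cos_inner_smul volume hb,
          finrank_euclideanSpace_fin]
    _ ≤ ∫ z in ball (0 : EuclideanSpace ℝ (Fin d)) b⁻¹, (1 - cos ⟪b • e, z⟫) * ν ‖z‖ := by
      refine setIntegral_mono_ae_restrict
        (((hcont.mul continuous_const).continuousOn.integrableOn_compact
          (isCompact_closedBall 0 b⁻¹)).mono_set ball_subset_closedBall)
        (integrable_one_sub_cos_inner_mul_nu hν_pos hint _).integrableOn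
        ((ae_restrict_iff' measurableSet_ball).2 ?_)
      filter_upwards [Measure.ae_ne volume 0] with z hz0 hz
      exact mul_le_mul_of_nonneg_left
        (hν_mono (norm_pos_iff.2 hz0) (inv_pos.2 hb) (mem_ball_zero_iff.1 hz).le)
        (sub_nonneg.2 (cos_le_one _))
    _ ≤ ψ d ν (b • e) := setIntegral_le_integral
        (integrable_one_sub_cos_inner_mul_nu hν_pos hint _)
        (by filter_upwards [ae_nonneg_nu_norm hν_pos] with z hz
            exact mul_nonneg (sub_nonneg.2 (cos_le_one _)) hz)
    _ ≤ ψstar d ν b :=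
        psi_le_psiStar hν_pos hint (by rw [norm_smul, he, norm_of_nonneg hb.le, mul_one])

lemma psiStar_pos (hν_pos : ∀ r : ℝ, 0 < r → 0 < ν r) (hν_mono : AntitoneOn ν (Ioi 0))
    (hint : Integrable (fun z : EuclideanSpace ℝ (Fin d) => min (‖z‖ ^ 2) 1 * ν ‖z‖))
    {r : ℝ} (hr : 0 < r) : 0 < ψstar d ν r := by
  obtain ⟨e, he⟩ := exists_norm_eq (EuclideanSpace ℝ (Fin d)) zero_le_one
  exact lt_of_lt_of_le (mul_pos (mul_pos (by positivity)
    (integral_ball_one_sub_cos_inner_pos volume he)) (hν_pos _ (inv_pos.2 hr)))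
    (nu_inv_mul_le_psiStar hν_pos hν_mono hint he hr)

lemma νs_le_of_potter (hν_pos : ∀ r : ℝ, 0 < r → 0 < ν r) (hν_mono : AntitoneOn ν (Ioi 0))
    (hint : Integrable (fun z : EuclideanSpace ℝ (Fin d) => min (‖z‖ ^ 2) 1 * ν ‖z‖))
    {β C R₀ δ : ℝ} (hC : 0 ≤ C) (hR₀ : 0 < R₀)
    (hpotter : ∀ R, R₀ ≤ R → ∀ r, δ ≤ r → ν (r * R) ≤ C * r ^ (-β) * ν R)
    {e : EuclideanSpace ℝ (Fin d)} (he : ‖e‖ = 1) {s : ℝ} (hs : 0 < s)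
    (hsR₀ : 1 / s < ψstar d ν R₀⁻¹) {y : EuclideanSpace ℝ (Fin d)} (hy : δ ≤ ‖y‖) :
    νs d ν s y ≤
      C / (∫ w in ball (0 : EuclideanSpace ℝ (Fin d)) 1, (1 - cos ⟪e, w⟫)) * ‖y‖ ^ (-β) := by
  set c := ∫ w in ball (0 : EuclideanSpace ℝ (Fin d)) 1, (1 - cos ⟪e, w⟫)
  have hc : 0 < c := integral_ball_one_sub_cos_inner_pos volume he
  set b := ψinv d ν (1 / s)
  rcases (psiInv_nonneg (1 / s) : 0 ≤ b).eq_or_lt with hb | hb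
  · -- `x / 0 = 0` makes `νˢ` vanish
    rw [show νs d ν s y = 0 by rw [νs, ← hb, zero_pow (NeZero.ne d), div_zero, zero_mul]]
    exact mul_nonneg (div_nonneg hC hc.le) (by positivity)
  have hbR₀ : R₀ ≤ b⁻¹ :=
    (le_inv_comm₀ hR₀ hb).2 (psiInv_lt_of_lt_psiStar hν_pos hint (by positivity) hb hsR₀).le
  have hmass : s * ((b ^ d)⁻¹ * c * ν b⁻¹) ≤ 1 :=
    calc s * ((b ^ d)⁻¹ * c * ν b⁻¹) ≤ s * (1 / s) := mul_le_mul_of_nonneg_left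
          ((nu_inv_mul_le_psiStar hν_pos hν_mono hint he hb).trans
            (psiStar_psiInv_le hν_pos hint hb)) hs.le
      _ = 1 := by field_simp
  calc νs d ν s y = s / b ^ d * ν (‖y‖ * b⁻¹) := by rw [νs, div_eq_mul_inv ‖y‖]
    _ ≤ s / b ^ d * (C * ‖y‖ ^ (-β) * ν b⁻¹) := by
        gcongr
        exact hpotter _ hbR₀ _ hy
    _ = s * ((b ^ d)⁻¹ * c * ν b⁻¹) * (C / c * ‖y‖ ^ (-β)) := by field_simp
    _ ≤ C / c * ‖y‖ ^ (-β) := mul_le_of_le_one_left (by positivity) hmass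

end LevyExponent

theorem statement8_general
    (d : ℕ) (hd : 1 ≤ d) (ν : ℝ → ℝ)
    (hν_pos : ∀ r : ℝ, 0 < r → 0 < ν r)
    (hν_mono : ∀ r₁ r₂ : ℝ, 0 < r₁ → r₁ ≤ r₂ → ν r₂ ≤ ν r₁)
    (hint : Integrable (fun z : EuclideanSpace ℝ (Fin d) => min (‖z‖ ^ 2) 1 * ν ‖z‖))
    (α : ℝ) (hα : α ∈ Set.Ioo (0:ℝ) 2)
    (hA2 : ∀ lam : ℝ, 0 < lam →
      Tendsto (fun r : ℝ => ν (lam * r) / ν r) atTop (nhds (lam ^ (-(d:ℝ) - α))))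
:
    ∀ δ : ℝ, 0 < δ → ∃ s₀ C : ℝ, 1 ≤ s₀ ∧ 0 < C ∧
      ∀ s : ℝ, s₀ ≤ s → ∀ y : EuclideanSpace ℝ (Fin d), δ ≤ ‖y‖ →
        νs d ν s y ≤ C * ‖y‖ ^ (-(d:ℝ) - α / 2) := by
  intro δ hδ
  have : NeZero d := ⟨by omega⟩
  have hanti : AntitoneOn ν (Ioi 0) := fun r₁ h₁ r₂ _ h => hν_mono r₁ r₂ h₁ h
  obtain ⟨e, he⟩ := exists_norm_eq (EuclideanSpace ℝ (Fin d)) zero_le_one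
  obtain ⟨C, R₀, hC, hR₀, hpotter⟩ := potter_upper hν_pos hanti (β := d + α / 2) (γ := d + α)
    (add_nonneg d.cast_nonneg (by linarith [hα.1])) (by linarith [hα.1])
    (by simpa only [neg_add'] using hA2) hδ
  have hκ := psiStar_pos hν_pos hanti hint (inv_pos.2 hR₀)
  refine ⟨max 1 (2 / ψstar d ν R₀⁻¹), _, le_max_left _ _,
    div_pos hC (integral_ball_one_sub_cos_inner_pos volume he), fun s hs y hy => ?_⟩
  have hs0 : 0 < s := one_pos.trans_le ((le_max_left _ _).trans hs)
  have hsκ : 1 / s < ψstar d ν R₀⁻¹ := by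
    rw [div_lt_iff₀ hs0]
    linarith [(div_le_iff₀ hκ).1 ((le_max_right _ _).trans hs)]
  rw [sub_eq_add_neg, ← neg_add]
  exact νs_le_of_potter hν_pos hanti hint hC.le hR₀ hpotter he hs0 hsκ hy

theorem statement8
    (d : ℕ) (hd : 1 ≤ d) (ν : ℝ → ℝ)
    (hν_pos : ∀ r : ℝ, 0 < r → 0 < ν r)
    (hν_mono : ∀ r₁ r₂ : ℝ, 0 < r₁ → r₁ ≤ r₂ → ν r₂ ≤ ν r₁)
    (hint : Integrable (fun z : EuclideanSpace ℝ (Fin d) => min (‖z‖ ^ 2) 1 * ν ‖z‖))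
    (hninf : ¬ Integrable (fun z : EuclideanSpace ℝ (Fin d) => ν ‖z‖))
    (α : ℝ) (hα : α ∈ Set.Ioo (0:ℝ) 2)
    (hA2 : ∀ lam : ℝ, 0 < lam →
      Tendsto (fun r : ℝ => ν (lam * r) / ν r) atTop (nhds (lam ^ (-(d:ℝ) - α))))
    (hnorm : ∀ ξ : EuclideanSpace ℝ (Fin d), ‖ξ‖ = 1 → ψ d ν ξ = 1)
:
    ∀ δ : ℝ, 0 < δ → ∃ s₀ C : ℝ, 1 ≤ s₀ ∧ 0 < C ∧
      ∀ s : ℝ, s₀ ≤ s → ∀ y : EuclideanSpace ℝ (Fin d), δ ≤ ‖y‖ →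
        νs d ν s y ≤ C * ‖y‖ ^ (-(d:ℝ) - α / 2) :=
  statement8_general d hd ν hν_pos hν_mono hint α hα hA2

end
end
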